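/- Let Q be an n×n real symmetric positive definite matrix, let A be an m×n real matrix of full row rank (A is surjective), and let B be a p×n real matrix with Range(Bᵀ) = Ker(A). Then A Q Aᵀ is invertible, and for all u, λ ∈ ℝⁿ, setting μ := λ + Q u, the pair of transmission conditions (B u = 0 and A λ = 0) holds if and only if Aᵀ (A Q Aᵀ)⁻¹ A μ = u. -/

import Mathlib

/-!
Since `A` is surjective, `Aᵀ` is injective, so `A Q Aᵀ` is positive definite and hence invertible.
Taking orthogonal complements in `Range(Bᵀ) = Ker(A)` gives `Ker(B) = Range(Aᵀ)`; here this is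
read off from `B Aᵀ = 0` and the dimension count `dim Ker B = n - rank B = rank A`.
With `K = Aᵀ (A Q Aᵀ)⁻¹ A` one has `K Q Aᵀ = Aᵀ` and `A Q K = A`: for `u = Aᵀ z` and `A λ = 0`
the first gives `K (λ + Q u) = u`; conversely `u = K μ` lies in `Range(Aᵀ) = Ker(B)`, and the
second gives `A λ = A μ - A Q K μ = 0`.
-/

open Matrix

namespace Matrix

variable {m n p R : Type*} [Fintype n]

theorem vecMul_injective_of_mulVec_surjective [CommRing R] [Fintype m] [DecidableEq m]
    {A : Matrix m n R} (hA : Function.Surjective A.mulVec) : Function.Injective A.vecMul := by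
  obtain ⟨C, hAC⟩ := mulVec_surjective_iff_exists_right_inverse.1 hA
  intro x y hxy
  simpa [vecMul_vecMul, hAC] using congrArg (· ᵥ* C) hxy

theorem PosDef.mul_mul_transpose_of_mulVec_surjective [Fintype m] [DecidableEq m]
    {Q : Matrix n n ℝ} {A : Matrix m n ℝ} (hQ : Q.PosDef) (hA : Function.Surjective A.mulVec) :
    (A * Q * Aᵀ).PosDef := by
  simpa using hQ.mul_mul_conjTranspose_same (vecMul_injective_of_mulVec_surjective hA)

theorem mul_transpose_eq_zero_of_range_transpose_le_ker [CommRing R] [Fintype p]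
    {A : Matrix m n R} {B : Matrix p n R}
    (h : LinearMap.range Bᵀ.mulVecLin ≤ LinearMap.ker A.mulVecLin) : A * Bᵀ = 0 := by
  classical
  apply Matrix.toLin'.injective
  rw [map_zero, toLin'_mul]
  exact LinearMap.range_le_ker_iff.1 h

theorem ker_mulVecLin_eq_range_transpose_of_range_transpose_eq_ker [Field R] [Fintype m]
    [Fintype p] {A : Matrix m n R} {B : Matrix p n R}
    (h : LinearMap.range Bᵀ.mulVecLin = LinearMap.ker A.mulVecLin) :
    LinearMap.ker B.mulVecLin = LinearMap.range Aᵀ.mulVecLin := by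
  have hBA : B * Aᵀ = 0 := by
    simpa using congrArg transpose (mul_transpose_eq_zero_of_range_transpose_le_ker h.le)
  have hle : LinearMap.range Aᵀ.mulVecLin ≤ LinearMap.ker B.mulVecLin :=
    LinearMap.range_le_ker_iff.2 (by rw [← mulVecLin_mul, hBA, mulVecLin_zero])
  refine (Submodule.eq_of_le_of_finrank_eq hle ?_).symm
  have hA := LinearMap.finrank_range_add_finrank_ker A.mulVecLin
  have hB := LinearMap.finrank_range_add_finrank_ker B.mulVecLin
  have hBt : Module.finrank R (LinearMap.range Bᵀ.mulVecLin) = B.rank := rank_transpose B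
  have hAt : Module.finrank R (LinearMap.range Aᵀ.mulVecLin) = A.rank := rank_transpose A
  rw [h] at hBt
  simp only [rank] at *
  omega

theorem transmission_conditions_iff [CommRing R] [Fintype m] [DecidableEq m] [Fintype p]
    {Q : Matrix n n R} {A : Matrix m n R} {B : Matrix p n R} (hM : IsUnit (A * Q * Aᵀ))
    (hB : LinearMap.ker B.mulVecLin = LinearMap.range Aᵀ.mulVecLin) (u lam : n → R) :
    (B *ᵥ u = 0 ∧ A *ᵥ lam = 0) ↔ (Aᵀ * (A * Q * Aᵀ)⁻¹ * A) *ᵥ (lam + Q *ᵥ u) = u := by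
  set M := A * Q * Aᵀ
  have hdet : IsUnit M.det := (isUnit_iff_isUnit_det M).1 hM
  have hright : Aᵀ * M⁻¹ * A * Q * Aᵀ = Aᵀ :=
    calc Aᵀ * M⁻¹ * A * Q * Aᵀ = Aᵀ * (M⁻¹ * M) := by simp only [M, Matrix.mul_assoc]
      _ = Aᵀ := by rw [nonsing_inv_mul _ hdet, Matrix.mul_one]
  have hleft : A * Q * (Aᵀ * M⁻¹ * A) = A :=
    calc A * Q * (Aᵀ * M⁻¹ * A) = M * M⁻¹ * A := by simp only [M, Matrix.mul_assoc]
      _ = A := by rw [mul_nonsing_inv _ hdet, Matrix.one_mul]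
  constructor
  · rintro ⟨hu, hlam⟩
    obtain ⟨z, rfl⟩ : u ∈ LinearMap.range Aᵀ.mulVecLin := hB.le hu
    change _ *ᵥ (lam + Q *ᵥ (Aᵀ *ᵥ z)) = Aᵀ *ᵥ z
    rw [mulVec_add, ← mulVec_mulVec, hlam, mulVec_zero, zero_add, mulVec_mulVec, mulVec_mulVec,
      hright]
  · intro h
    have hu : u ∈ LinearMap.range Aᵀ.mulVecLin :=
      ⟨(M⁻¹ * A) *ᵥ (lam + Q *ᵥ u), by rwa [mulVecLin_apply, mulVec_mulVec, ← Matrix.mul_assoc]⟩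
    refine ⟨hB.ge hu, ?_⟩
    have hAQu : A *ᵥ (Q *ᵥ u) = A *ᵥ (lam + Q *ᵥ u) := by
      conv_lhs => rw [← h]
      rw [mulVec_mulVec, mulVec_mulVec, hleft]
    rwa [mulVec_add, right_eq_add] at hAQu

end Matrix

theorem stmt_4_general {n m p : Type*} [Fintype n] [Fintype m] [Fintype p]
    [DecidableEq m]
    (Q : Matrix n n ℝ) (A : Matrix m n ℝ) (B : Matrix p n ℝ)
    (hQ : Q.PosDef)
    (hA : Function.Surjective A.mulVec)
    (hB : LinearMap.range Bᵀ.mulVecLin = LinearMap.ker A.mulVecLin) :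
    IsUnit (A * Q * Aᵀ) ∧
    ∀ u lam : n → ℝ,
      (B *ᵥ u = 0 ∧ A *ᵥ lam = 0) ↔
        (Aᵀ * (A * Q * Aᵀ)⁻¹ * A) *ᵥ (lam + Q *ᵥ u) = u := by
  have hM : IsUnit (A * Q * Aᵀ) := (hQ.mul_mul_transpose_of_mulVec_surjective hA).isUnit
  exact ⟨hM, transmission_conditions_iff hM
    (ker_mulVecLin_eq_range_transpose_of_range_transpose_eq_ker hB)⟩

/-- If `Q` is symmetric positive definite, `A` has full row rank, and
`Range(Bᵀ) = Ker(A)`, then `A Q Aᵀ` is invertible and, for `μ = λ + Q u`, the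
transmission conditions `B u = 0 ∧ A λ = 0` hold iff `Aᵀ (A Q Aᵀ)⁻¹ A μ = u`. -/
theorem stmt_4 {n m p : Type*} [Fintype n] [Fintype m] [Fintype p]
    [DecidableEq n] [DecidableEq m] [DecidableEq p]
    (Q : Matrix n n ℝ) (A : Matrix m n ℝ) (B : Matrix p n ℝ)
    (hQsym : Qᵀ = Q) (hQ : Q.PosDef)
    (hA : Function.Surjective A.mulVec)
    (hB : LinearMap.range Bᵀ.mulVecLin = LinearMap.ker A.mulVecLin) :
    IsUnit (A * Q * Aᵀ) ∧
    ∀ u lam : n → ℝ,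
      (B *ᵥ u = 0 ∧ A *ᵥ lam = 0) ↔
        (Aᵀ * (A * Q * Aᵀ)⁻¹ * A) *ᵥ (lam + Q *ᵥ u) = u :=
  stmt_4_general Q A B hQ hA hB
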